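/- The integral ∫_{1}^{∞} dx/√(x³ - 1) equals Γ(1/3)³ / (2^{4/3} π). -/

import Mathlib

/-!
The substitution `x = t ^ (-1/3)` turns the integral into the Beta integral `B(1/6, 1/2) / 3`,
that is `Γ(1/6) Γ(1/2) / (3 Γ(2/3))`. Legendre's duplication formula at `1/6` and the reflection
formula at `1/3` express `Γ(1/6)` and `Γ(2/3)` through `Γ(1/3)`, which gives the closed form.
-/

open MeasureTheory Real Set

theorem Real.integral_rpow_mul_one_sub_rpow {a b : ℝ} (ha : 0 < a) (hb : 0 < b) :
    ∫ x in (0 : ℝ)..1, x ^ (a - 1) * (1 - x) ^ (b - 1) = Gamma a * Gamma b / Gamma (a + b) := by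
  apply Complex.ofReal_injective
  rw [Complex.ofReal_div, Complex.ofReal_mul, ← Complex.Gamma_ofReal, ← Complex.Gamma_ofReal,
    ← Complex.Gamma_ofReal, Complex.ofReal_add,
    ← Complex.betaIntegral_eq_Gamma_mul_div a b (by simpa) (by simpa), Complex.betaIntegral,
    ← intervalIntegral.integral_ofReal]
  refine intervalIntegral.integral_congr fun x hx ↦ ?_
  rw [uIcc_of_le zero_le_one] at hx
  push_cast
  rw [Complex.ofReal_cpow hx.1, Complex.ofReal_cpow (sub_nonneg.2 hx.2)]
  push_cast
  rfl

lemma Real.image_rpow_Ioo_zero_one_of_neg {r : ℝ} (hr : r < 0) :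
    (fun t : ℝ ↦ t ^ r) '' Ioo 0 1 = Ioi 1 := by
  ext y
  constructor
  · rintro ⟨t, ⟨ht0, ht1⟩, rfl⟩
    exact one_lt_rpow_of_pos_of_lt_one_of_neg ht0 ht1 hr
  · intro hy
    have hy0 : 0 < y := one_pos.trans hy
    refine ⟨y ^ r⁻¹,
      ⟨rpow_pos_of_pos hy0 _, rpow_lt_one_of_one_lt_of_neg hy (inv_lt_zero.2 hr)⟩, ?_⟩
    show (y ^ r⁻¹) ^ r = y
    rw [← rpow_mul hy0.le, inv_mul_cancel₀ hr.ne, rpow_one]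

theorem Real.integral_Ioi_one_div_sqrt_pow_sub_one {n : ℕ} (hn : n ≠ 0) :
    ∫ x in Ioi (1 : ℝ), 1 / √(x ^ n - 1) =
      (n : ℝ)⁻¹ *
        ∫ t in (0 : ℝ)..1, t ^ (1 / 2 - (n : ℝ)⁻¹ - 1) * (1 - t) ^ (1 / 2 - 1 : ℝ) := by
  set r : ℝ := -(n : ℝ)⁻¹ with hr_def
  have hr : r < 0 := by simp [r, Nat.pos_of_ne_zero hn]
  have hderiv : ∀ t ∈ Ioo (0 : ℝ) 1,
      HasDerivWithinAt (fun t : ℝ ↦ t ^ r) (r * t ^ (r - 1)) (Ioo 0 1) t := fun t ht ↦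
    (hasDerivAt_rpow_const (Or.inl ht.1.ne')).hasDerivWithinAt
  have hinj : InjOn (fun t : ℝ ↦ t ^ r) (Ioo 0 1) :=
    ((strictAntiOn_rpow_Ioi_of_exponent_neg hr).mono Ioo_subset_Ioi_self).injOn
  have hintegrand : ∀ t ∈ Ioo (0 : ℝ) 1, |r * t ^ (r - 1)| * (1 / √((t ^ r) ^ n - 1)) =
      (n : ℝ)⁻¹ * (t ^ (1 / 2 - (n : ℝ)⁻¹ - 1) * (1 - t) ^ (1 / 2 - 1 : ℝ)) := by
    rintro t ⟨ht0, ht1⟩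
    have hpow : (t ^ r) ^ n = t⁻¹ := by
      rw [← rpow_natCast, ← rpow_mul ht0.le, neg_mul, inv_mul_cancel₀ (by exact_mod_cast hn),
        rpow_neg_one]
    have hexp : t ^ (1 / 2 - (n : ℝ)⁻¹ - 1) = t ^ (r - 1) * t ^ ((1 : ℝ) / 2) := by
      rw [← rpow_add ht0, hr_def]; ring_nf
    rw [hpow, show t⁻¹ - 1 = (1 - t) / t by field_simp, sqrt_div' _ ht0.le, sqrt_eq_rpow,
      sqrt_eq_rpow, abs_mul, abs_neg, abs_of_pos (rpow_pos_of_pos ht0 _),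
      abs_of_pos (by positivity), hexp, show (1 : ℝ) / 2 - 1 = -(1 / 2) by norm_num,
      rpow_neg (sub_pos.2 ht1).le]
    field_simp
  rw [← image_rpow_Ioo_zero_one_of_neg hr,
    integral_image_eq_integral_abs_deriv_smul measurableSet_Ioo hderiv hinj]
  simp only [smul_eq_mul]
  rw [setIntegral_congr_fun measurableSet_Ioo hintegrand, integral_const_mul,
    intervalIntegral.integral_of_le zero_le_one, integral_Ioc_eq_integral_Ioo]

lemma Real.Gamma_one_third_mul_Gamma_two_thirds :
    Gamma (1 / 3) * Gamma (2 / 3) = 2 * π / √3 := by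
  rw [show (2 : ℝ) / 3 = 1 - 1 / 3 by norm_num, Gamma_mul_Gamma_one_sub, mul_one_div,
    sin_pi_div_three]
  field_simp

lemma Real.Gamma_one_sixth_mul_Gamma_two_thirds :
    Gamma (1 / 6) * Gamma (2 / 3) = 2 ^ ((2 : ℝ) / 3) * √π * Gamma (1 / 3) := by
  rw [show (2 : ℝ) / 3 = 1 / 6 + 1 / 2 by norm_num, Gamma_mul_Gamma_add_half]
  norm_num
  ring

lemma Real.Gamma_one_sixth_mul_Gamma_one_half_div_Gamma_two_thirds :
    Gamma (1 / 6) * Gamma (1 / 2) / Gamma (2 / 3) =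
      3 * Gamma (1 / 3) ^ 3 / (2 ^ ((4 : ℝ) / 3) * π) := by
  have h23 : Gamma (2 / 3) ≠ 0 := (Gamma_pos_of_pos (by norm_num)).ne'
  have hsq : (Gamma (1 / 3) * Gamma (2 / 3)) ^ 2 * 3 = 4 * π ^ 2 := by
    rw [Gamma_one_third_mul_Gamma_two_thirds, div_pow, sq_sqrt zero_le_three]
    field_simp
    ring
  have hpow : (2 : ℝ) ^ ((2 : ℝ) / 3) * 2 ^ ((4 : ℝ) / 3) = 4 := by
    rw [← rpow_add two_pos]; norm_num
  have hpi : √π * √π = π := mul_self_sqrt pi_pos.le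
  rw [Gamma_one_half_eq, div_eq_div_iff h23 (by positivity)]
  apply mul_right_cancel₀ h23
  linear_combination √π * 2 ^ ((4 : ℝ) / 3) * π * Gamma_one_sixth_mul_Gamma_two_thirds
    + π * Gamma (1 / 3) * √π * √π * hpow + 4 * π * Gamma (1 / 3) * hpi - Gamma (1 / 3) * hsq

theorem fermat_elliptic_period :
    ∫ x in Set.Ioi (1 : ℝ), 1 / Real.sqrt (x ^ 3 - 1) =
      Real.Gamma (1 / 3) ^ 3 / (2 ^ ((4 : ℝ) / 3) * Real.pi) := by
  calc ∫ x in Ioi (1 : ℝ), 1 / √(x ^ 3 - 1)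
      = 3⁻¹ * ∫ t in (0 : ℝ)..1, t ^ (1 / 6 - 1 : ℝ) * (1 - t) ^ (1 / 2 - 1 : ℝ) := by
        rw [integral_Ioi_one_div_sqrt_pow_sub_one three_ne_zero]
        norm_num
    _ = 3⁻¹ * (Gamma (1 / 6) * Gamma (1 / 2) / Gamma (2 / 3)) := by
        rw [integral_rpow_mul_one_sub_rpow (by norm_num) (by norm_num)]
        norm_num
    _ = Gamma (1 / 3) ^ 3 / (2 ^ ((4 : ℝ) / 3) * π) := by
        rw [Gamma_one_sixth_mul_Gamma_one_half_div_Gamma_two_thirds]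
        ring
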